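/- Let H and A be finitely generated abelian groups and ν : H → A a surjective homomorphism; let K = ker ν and let K̄ be the primitive closure of K. Let χ ≤ H be a subgroup, set T = V(χ), and let ρ ∈ Ĥ be a character such that ρ^m ∈ T for some integer m ≥ 1 coprime to the order (cardinality) of Tors(A). Then the set {σ ∈ Ĥ : σ(x) = 1 for all x ∈ K, and σρ⁻¹ ∈ T} is infinite if and only if the set {σ ∈ Ĥ : σ(x) = 1 for all x ∈ K̄, and σρ⁻¹ ∈ T} is infinite. (Equivalently, for W = ρT one has q⁻¹(Υ_Ā(W)) = Υ_A(W).) -/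

import Mathlib

open scoped TensorProduct Pointwise

/-- The set of surjective homomorphisms between two additive groups. -/
def EpiSet (G A : Type*) [AddGroup G] [AddGroup A] : Type _ :=
  {f : G →+ A // Function.Surjective f}

/-- Two epimorphisms are equivalent if they differ by an automorphism of the target. -/
def GammaRel (G A : Type*) [AddGroup G] [AddGroup A] (ν₁ ν₂ : EpiSet G A) : Prop :=
  ∃ α : A ≃+ A, ∀ g : G, α (ν₁.1 g) = ν₂.1 g

/-- The parameter set `Γ(G,A) = Epi(G,A)/Aut(A)`. -/
def GammaSet (G A : Type*) [AddGroup G] [AddGroup A] : Type _ :=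
  Quot (GammaRel G A)

/-- The character group of an (additively written) abelian group. -/
abbrev CharGp (H : Type*) [AddCommGroup H] : Type _ := Multiplicative H →* ℂˣ

/-- `V(ξ)`, the set of characters vanishing (i.e. taking value 1) on a subgroup `ξ`. -/
def charV {H : Type*} [AddCommGroup H] (ξ : AddSubgroup H) : Set (CharGp H) :=
  {ρ | ∀ x ∈ ξ, ρ (Multiplicative.ofAdd x) = 1}

/-- The primitive closure of a subgroup of an abelian group. -/
def pclose {H : Type*} [AddCommGroup H] (ξ : AddSubgroup H) : AddSubgroup H where
  carrier := {x | ∃ m : ℕ, 0 < m ∧ m • x ∈ ξ}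
  zero_mem' := ⟨1, Nat.one_pos, by simpa using ξ.zero_mem⟩
  add_mem' := by
    rintro a b ⟨m, hm, ha⟩ ⟨k, hk, hb⟩
    refine ⟨m * k, Nat.mul_pos hm hk, ?_⟩
    rw [smul_add]
    exact ξ.add_mem (by rw [mul_comm, mul_smul]; exact ξ.nsmul_mem ha k)
      (by rw [mul_smul]; exact ξ.nsmul_mem hb m)
  neg_mem' := by
    rintro a ⟨m, hm, ha⟩
    exact ⟨m, hm, by rw [smul_neg]; exact ξ.neg_mem ha⟩

/-- A subgroup is primitive if it equals its primitive closure. -/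
def IsPrimitiveSub {H : Type*} [AddCommGroup H] (ξ : AddSubgroup H) : Prop :=
  pclose ξ = ξ

/-- The determinant group `ξ̄/ξ` of a subgroup. -/
def detGroup {H : Type*} [AddCommGroup H] (ξ : AddSubgroup H) : Type _ :=
  ↥(pclose ξ) ⧸ ξ.addSubgroupOf (pclose ξ)

noncomputable instance {H : Type*} [AddCommGroup H] (ξ : AddSubgroup H) :
    AddCommGroup (detGroup ξ) := by unfold detGroup; infer_instance

/-- The rank of a f.g. abelian group, `dim_ℚ (B ⊗ ℚ)`. -/
noncomputable def rkOf (B : Type*) [AddCommGroup B] : ℕ :=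
  Module.finrank ℚ (ℚ ⊗[ℤ] B)

/-- The largest order of an element of `K`. -/
noncomputable def maxOrder (K : Type*) [AddGroup K] : ℕ :=
  sSup (Set.range fun g : K => addOrderOf g)

/-- The translate `η·V(ξ)` of the "subtorus" `V(ξ)` by the character `η`. -/
def transTorus {H : Type*} [AddCommGroup H] (η : CharGp H) (ξ : AddSubgroup H) :
    Set (CharGp H) :=
  (η * ·) '' charV ξ

/-- `S` is a maximal positive-dimensional torsion-translated subtorus inside `W`. -/
def MaxTransTorusIn {H : Type*} [AddCommGroup H] (S W : Set (CharGp H)) : Prop :=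
  S.Infinite ∧ S ⊆ W ∧
    ∀ (χ : AddSubgroup H) (η' : CharGp H), IsPrimitiveSub χ → IsOfFinOrder η' →
      S ⊆ transTorus η' χ → transTorus η' χ ⊆ W → transTorus η' χ = S

/-- The collection `Ξ_d(W)` of subgroups of `H` attached to a subvariety `W` of the
character group. -/
def Xi {H : Type*} [AddCommGroup H] (d : ℕ) (W : Set (CharGp H)) : Set (AddSubgroup H) :=
  {ξ | IsAddCyclic (detGroup ξ) ∧ Nat.card (detGroup ξ) ∣ d ∧
    ∃ η : CharGp H, IsOfFinOrder η ∧ orderOf η = Nat.card (detGroup ξ) ∧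
      (∀ x ∈ ξ, η (Multiplicative.ofAdd x) = 1) ∧
      {x : H | x ∈ pclose ξ ∧ η (Multiplicative.ofAdd x) = 1} = (ξ : Set H) ∧
      MaxTransTorusIn (transTorus η (pclose ξ)) W}

/-- Evaluation of an element of the group algebra `ℂ[H]` at a character, i.e. the
`ℂ`-algebra homomorphism `ℂ[H] → ℂ` extending the character. -/
noncomputable def evalAt {H : Type*} [AddCommGroup H] (ρ : CharGp H) :
    AddMonoidAlgebra ℂ H →ₐ[ℂ] ℂ :=
  AddMonoidAlgebra.lift (R := ℂ) (M := H) (A := ℂ) ((Units.coeHom ℂ).comp ρ)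

/-- `W` is a Zariski closed subset of the character group. -/
def IsZarClosed {H : Type*} [AddCommGroup H] (W : Set (CharGp H)) : Prop :=
  ∃ S : Set (AddMonoidAlgebra ℂ H), W = {ρ | ∀ f ∈ S, evalAt ρ f = 0}

/-- The support of a module: the set of maximal ideals at which the localization is
nonzero. -/
def suppMax (S M : Type*) [CommRing S] [AddCommGroup M] [Module S M] :
    Set (MaximalSpectrum S) :=
  {m | haveI := m.isMaximal.isPrime; Nontrivial (LocalizedModule m.asIdeal.primeCompl M)}

/-!
Since `K̄/K` embeds in `Tors(A)`, a character trivial on `K` becomes trivial on `K̄` after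
raising it to the power `n = |Tors(A)|`. As `m` is coprime to `n` there is `N = 1 + mk` with
`n ∣ N`, and `ρ^m ∈ T` makes `σ ↦ σ^N` preserve the coset `ρT`. So this power map sends the
first set into the second, and its fibres are finite because `Ĥ` has only finitely many
`N`-torsion points when `H` is finitely generated. The converse is an inclusion of sets.
-/

lemma AddCommGroup.finite_torsion_of_fg (A : Type*) [AddCommGroup A] [AddGroup.FG A] :
    Finite (AddCommGroup.torsion A) := by
  have : Module.Finite ℤ A := Module.Finite.iff_addGroup_fg.mpr ‹_›
  have : Finite (Submodule.torsion ℤ A) :=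
    Module.finite_of_fg_torsion _ Submodule.torsion_isTorsion
  have : Finite (Submodule.torsion ℤ A).toAddSubgroup := this
  rwa [Submodule.torsion_int] at this

lemma Nat.exists_dvd_one_add_mul {m n : ℕ} (hm : 0 < m) (hn : 0 < n) (h : m.Coprime n) :
    ∃ k, n ∣ 1 + m * k := by
  have hpos : 0 < n ^ m.totient := pow_pos hn _
  obtain ⟨k, hk⟩ := (Nat.modEq_iff_dvd' hpos).mp (Nat.ModEq.pow_totient h.symm).symm
  refine ⟨k, ?_⟩
  rw [← hk, Nat.add_sub_cancel' hpos]
  exact dvd_pow_self n (Nat.totient_pos.mpr hm).ne'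

lemma Set.Infinite.image_of_finite_ker {G G' : Type*} [Group G] [Group G'] (f : G →* G')
    (hf : (f.ker : Set G).Finite) {s : Set G} (hs : s.Infinite) : (f '' s).Infinite := by
  refine fun himage => hs (Set.Finite.of_finite_fibers f himage fun b _ => ?_)
  rcases (s ∩ f ⁻¹' {b}).eq_empty_or_nonempty with h | ⟨g₀, -, hg₀⟩
  · simp [h]
  refine (hf.image (g₀ * ·)).subset fun g hg => ⟨g₀⁻¹ * g, ?_, mul_inv_cancel_left g₀ g⟩
  simp_all [MonoidHom.mem_ker]

lemma MonoidHom.finite_setOf_pow_eq_one {G M : Type*} [Group G] [Group.FG G] [CommGroup M]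
    {N : ℕ} (hM : {u : M | u ^ N = 1}.Finite) : {τ : G →* M | τ ^ N = 1}.Finite := by
  obtain ⟨S, hS, hSfin⟩ := Group.fg_iff.mp ‹Group.FG G›
  have : Finite S := hSfin
  let restrict : (G →* M) → (S → M) := fun τ s => τ s
  have hinj : Function.Injective restrict := fun τ₁ τ₂ h =>
    MonoidHom.eq_of_eqOn_dense hS fun s hs => congrFun h ⟨s, hs⟩
  refine Set.Finite.of_finite_image ((Set.Finite.pi fun _ => hM).subset ?_) hinj.injOn
  rintro _ ⟨τ, hτ, rfl⟩ s -
  simpa using congrArg (· (s : G)) (hτ : τ ^ N = 1)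

lemma Subgroup.pow_one_add_mul_mul_inv_mem {G : Type*} [CommGroup G] (T : Subgroup G)
    {ρ σ : G} {m : ℕ} (k : ℕ) (hρ : ρ ^ m ∈ T) (hσ : σ * ρ⁻¹ ∈ T) :
    σ ^ (1 + m * k) * ρ⁻¹ ∈ T := by
  have : σ ^ (1 + m * k) * ρ⁻¹ = (σ * ρ⁻¹) ^ (1 + m * k) * (ρ ^ m) ^ k := by
    rw [mul_pow, ← pow_mul, inv_pow, pow_add ρ, pow_one]
    group
  rw [this]
  exact T.mul_mem (T.pow_mem hσ _) (T.pow_mem hρ _)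

lemma CharGp.finite_setOf_pow_eq_one (H : Type*) [AddCommGroup H] [AddGroup.FG H] {N : ℕ}
    (hN : 0 < N) : {τ : CharGp H | τ ^ N = 1}.Finite := by
  have : NeZero N := ⟨hN.ne'⟩
  have hroots : (rootsOfUnity N ℂ : Set ℂˣ).Finite := inferInstanceAs (Finite (rootsOfUnity N ℂ))
  exact MonoidHom.finite_setOf_pow_eq_one (hroots.subset fun u => (mem_rootsOfUnity N u).mpr)

lemma AddMonoidHom.card_torsion_nsmul_mem_ker {H A : Type*} [AddCommGroup H] [AddCommGroup A]
    (ν : H →+ A) {x : H} (hx : x ∈ pclose ν.ker) :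
    Nat.card (AddCommGroup.torsion A) • x ∈ ν.ker := by
  obtain ⟨t, ht, htx⟩ := hx
  have hνx : ν x ∈ AddCommGroup.torsion A :=
    isOfFinAddOrder_iff_nsmul_eq_zero.mpr ⟨t, ht, by rwa [← map_nsmul]⟩
  rw [AddMonoidHom.mem_ker, map_nsmul]
  exact congrArg Subtype.val (card_nsmul_eq_zero' (x := (⟨ν x, hνx⟩ : AddCommGroup.torsion A)))

section CharV

variable {H : Type*} [AddCommGroup H]

lemma le_pclose (ξ : AddSubgroup H) : ξ ≤ pclose ξ :=
  fun x hx => ⟨1, Nat.one_pos, by simpa using hx⟩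

lemma charV_anti {ξ ζ : AddSubgroup H} (h : ξ ≤ ζ) : charV ζ ⊆ charV ξ :=
  fun _ hσ x hx => hσ x (h hx)

def charVSubgroup (ξ : AddSubgroup H) : Subgroup (CharGp H) where
  carrier := charV ξ
  mul_mem' ha hb x hx := by simp [ha x hx, hb x hx]
  one_mem' _ _ := rfl
  inv_mem' ha x hx := by simp [ha x hx]

lemma pow_mem_charV_of_nsmul_mem {ξ ζ : AddSubgroup H} {n N : ℕ} (hζ : ∀ x ∈ ζ, n • x ∈ ξ)
    (hnN : n ∣ N) {σ : CharGp H} (hσ : σ ∈ charV ξ) : σ ^ N ∈ charV ζ := by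
  obtain ⟨t, rfl⟩ := hnN
  intro x hx
  have hσn : σ (Multiplicative.ofAdd x) ^ n = 1 := by
    simpa [← map_pow] using hσ _ (hζ x hx)
  simp [pow_mul, hσn]

end CharV

theorem statement15_general {H A : Type*} [AddCommGroup H] [AddGroup.FG H]
    [AddCommGroup A] [AddGroup.FG A]
    (ν : H →+ A)
    (χ : AddSubgroup H) (ρ : CharGp H) (m : ℕ) (hm : 1 ≤ m)
    (hcop : Nat.Coprime m (Nat.card ↥(AddCommGroup.torsion A)))
    (hρ : ρ ^ m ∈ charV χ) :
    {σ : CharGp H | (∀ x ∈ ν.ker, σ (Multiplicative.ofAdd x) = 1) ∧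
        σ * ρ⁻¹ ∈ charV χ}.Infinite ↔
    {σ : CharGp H | (∀ x ∈ pclose ν.ker, σ (Multiplicative.ofAdd x) = 1) ∧
        σ * ρ⁻¹ ∈ charV χ}.Infinite := by
  have := AddCommGroup.finite_torsion_of_fg A
  obtain ⟨k, hk⟩ := Nat.exists_dvd_one_add_mul hm Nat.card_pos hcop
  constructor
  · intro h
    refine (h.image_of_finite_ker (powMonoidHom (1 + m * k)) ?_).mono ?_
    · exact CharGp.finite_setOf_pow_eq_one H (by omega)
    · rintro _ ⟨σ, ⟨hσK, hσρ⟩, rfl⟩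
      exact ⟨pow_mem_charV_of_nsmul_mem (fun x => ν.card_torsion_nsmul_mem_ker) hk hσK,
        (charVSubgroup χ).pow_one_add_mul_mul_inv_mem k hρ hσρ⟩
  · exact fun h => h.mono fun σ hσ => ⟨charV_anti (le_pclose _) hσ.1, hσ.2⟩

/-- Suppose `ρ^m ∈ T = V(χ)` for some `m ≥ 1` coprime to the order of `Tors(A)`.  Then
`im(ν̂) ∩ ρT` is infinite iff `im` of the induced map on maximal torsion-free quotients,
i.e. `V(ker ν̄) = V(primitive closure of ker ν)`, meets `ρT` in an infinite set. -/
theorem statement15 {H A : Type*} [AddCommGroup H] [AddGroup.FG H]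
    [AddCommGroup A] [AddGroup.FG A]
    (ν : H →+ A) (hν : Function.Surjective ν)
    (χ : AddSubgroup H) (ρ : CharGp H) (m : ℕ) (hm : 1 ≤ m)
    (hcop : Nat.Coprime m (Nat.card ↥(AddCommGroup.torsion A)))
    (hρ : ρ ^ m ∈ charV χ) :
    {σ : CharGp H | (∀ x ∈ ν.ker, σ (Multiplicative.ofAdd x) = 1) ∧
        σ * ρ⁻¹ ∈ charV χ}.Infinite ↔
    {σ : CharGp H | (∀ x ∈ pclose ν.ker, σ (Multiplicative.ofAdd x) = 1) ∧
        σ * ρ⁻¹ ∈ charV χ}.Infinite :=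
  statement15_general ν χ ρ m hm hcop hρ
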